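/- arXiv:2111.14380 — 10 statements merged into one kernel-verified Lean document; each statement's English description precedes it below -/
import Mathlib

section
/- If ℬ is a minimal pre-base for a pre-topological space (Z,𝒯), then ℬ ⊆ 𝓕 for every pre-base 𝓕 of (Z,𝒯). Consequently, a pre-topological space admits at most one minimal pre-base. -/
/-- A pre-topology on a type `Z`. -/
def IsPreTop {Z : Type*} (T : Set (Set Z)) : Prop :=
  ⋃₀ T = Set.univ ∧ ∀ T' ⊆ T, ⋃₀ T' ∈ T

/-- A pre-base for `T`. -/
def IsPreBase {Z : Type*} (T B : Set (Set Z)) : Prop :=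
  B ⊆ T ∧ (∀ b ∈ B, b.Nonempty) ∧ ∀ U ∈ T, ∃ B' ⊆ B, ⋃₀ B' = U

/-- A minimal pre-base. -/
def IsMinimalPreBase {Z : Type*} (T P : Set (Set Z)) : Prop :=
  IsPreBase T P ∧ ∀ B ⊂ P, ¬ IsPreBase T B

lemma minimal_subset_preBase {Z : Type*} (T : Set (Set Z)) (B : Set (Set Z))
    (hB : IsMinimalPreBase T B) (F : Set (Set Z)) (hF : IsPreBase T F) : B ⊆ F := by
  intro b hbB
  by_contra hbF
  obtain ⟨⟨hBT, hBne, hBgen⟩, hmin⟩ := hB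
  obtain ⟨hFT, hFne, hFgen⟩ := hF
  obtain ⟨F', hF'F, hF'b⟩ := hFgen b (hBT hbB)
  set D : Set (Set Z) := {c | c ∈ B ∧ c ≠ b ∧ c ⊆ b} with hD
  have hDb : ⋃₀ D = b := by
    apply subset_antisymm
    · exact Set.sUnion_subset fun c hc => hc.2.2
    · intro x hx
      rw [← hF'b] at hx
      obtain ⟨f, hfF', hxf⟩ := hx
      obtain ⟨Bf, hBfB, hBff⟩ := hBgen f (hFT (hF'F hfF'))
      have hxf' : x ∈ ⋃₀ Bf := by rw [hBff]; exact hxf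
      obtain ⟨c, hcBf, hxc⟩ := hxf'
      have hfb : f ⊆ b := by rw [← hF'b]; exact Set.subset_sUnion_of_mem hfF'
      have hcb : c ⊆ b := ((hBff ▸ Set.subset_sUnion_of_mem hcBf) : c ⊆ f).trans hfb
      refine ⟨c, ⟨hBfB hcBf, ?_, hcb⟩, hxc⟩
      intro hcb
      have hbf : b ⊆ f := by
        rw [← hcb]; exact (hBff ▸ Set.subset_sUnion_of_mem hcBf : c ⊆ f)
      have hbeq : b = f := subset_antisymm hbf hfb
      exact hbF (hF'F (by rw [hbeq]; exact hfF'))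
  have hpre : IsPreBase T (B \ {b}) := by
    refine ⟨fun c hc => hBT hc.1, fun c hc => hBne c hc.1, ?_⟩
    intro U hU
    obtain ⟨B', hB'B, hB'U⟩ := hBgen U hU
    by_cases hb : b ∈ B'
    · refine ⟨(B' \ {b}) ∪ D, ?_, ?_⟩
      · rintro c (⟨hc1, hc2⟩ | hc)
        exacts [⟨hB'B hc1, hc2⟩, ⟨hc.1, hc.2.1⟩]
      · rw [Set.sUnion_union, hDb, ← hB'U]
        ext x
        simp only [Set.mem_union, Set.mem_sUnion, Set.mem_diff, Set.mem_singleton_iff]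
        constructor
        · rintro (⟨c, ⟨hc, _⟩, hxc⟩ | hxb)
          exacts [⟨c, hc, hxc⟩, ⟨b, hb, hxb⟩]
        · rintro ⟨c, hc, hxc⟩
          by_cases hcb : c = b
          · exact Or.inr (hcb ▸ hxc)
          · exact Or.inl ⟨c, ⟨hc, hcb⟩, hxc⟩
    · exact ⟨B', fun c hc => ⟨hB'B hc, fun h => hb (h ▸ hc)⟩, hB'U⟩
  exact hmin (B \ {b}) (Set.sdiff_singleton_ssubset.mpr hbB) hpre

/-- a minimal pre-base is contained in every pre-base; consequently
a pre-topological space admits at most one minimal pre-base. -/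
theorem stmt_2 {Z : Type*} (T : Set (Set Z)) (hT : IsPreTop T)
    (B : Set (Set Z)) (hB : IsMinimalPreBase T B) :
    (∀ F : Set (Set Z), IsPreBase T F → B ⊆ F) ∧
    (∀ B' : Set (Set Z), IsMinimalPreBase T B' → B' = B) :=
  ⟨fun F hF => minimal_subset_preBase T B hB F hF,
   fun B' hB' => subset_antisymm (minimal_subset_preBase T B' hB' B hB.1)
     (minimal_subset_preBase T B hB B' hB'.1)⟩
end

section
/- Let (Z,τ) be a pre-topological space, let B ⊆ Z, and let U ∈ τ. Define [U]_B = {O ∈ τ : O ∩ B = U ∩ B}. Then the family γ = {T \ ⋂[U]_B : T ∈ [U]_B} ∪ {∅} is a pre-topology on the set ⋃γ. -/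
/-- A pre-topology on a (carrier) subset `C` of `Z`: a family of subsets whose union is `C`
and which is closed under unions of arbitrary subfamilies. -/
def IsPreTopOn {Z : Type*} (C : Set Z) (T : Set (Set Z)) : Prop :=
  ⋃₀ T = C ∧ ∀ T' ⊆ T, ⋃₀ T' ∈ T

/-- for a pre-topological space `(Z, τ)`, a subset `B ⊆ Z` and `U ∈ τ`,
letting `[U]_B = {O ∈ τ : O ∩ B = U ∩ B}`, the family
`γ = {T \ ⋂[U]_B : T ∈ [U]_B} ∪ {∅}` is a pre-topology on `⋃γ`. -/
theorem stmt_3 {Z : Type*} (τ : Set (Set Z)) (hτ : IsPreTop τ) (B : Set Z)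
    (U : Set Z) (hU : U ∈ τ) :
    IsPreTopOn (⋃₀ ({W : Set Z | ∃ T ∈ {O ∈ τ | O ∩ B = U ∩ B},
        W = T \ ⋂₀ {O ∈ τ | O ∩ B = U ∩ B}} ∪ {∅}))
      ({W : Set Z | ∃ T ∈ {O ∈ τ | O ∩ B = U ∩ B},
        W = T \ ⋂₀ {O ∈ τ | O ∩ B = U ∩ B}} ∪ {∅}) := by
  classical
  set cls : Set (Set Z) := {O ∈ τ | O ∩ B = U ∩ B} with hcls
  set I : Set Z := ⋂₀ cls with hI
  set γ : Set (Set Z) := {W : Set Z | ∃ T ∈ cls, W = T \ I} ∪ {∅} with hγ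
  refine ⟨rfl, ?_⟩
  intro T' hT'
  by_cases hemp : T' ⊆ {(∅ : Set Z)}
  · have : ⋃₀ T' = (∅ : Set Z) := by
      apply Set.eq_empty_iff_forall_notMem.2
      rintro x ⟨W, hW, hx⟩
      have := hemp hW
      simp_all
    rw [this]; exact Or.inr rfl
  · -- there is a member of T' coming from the left part with nonempty witness
    set S : Set (Set Z) := {T ∈ cls | T \ I ∈ T'} with hS
    have hSne : S.Nonempty := by
      rw [Set.not_subset] at hemp
      obtain ⟨W, hW, hWne⟩ := hemp
      rcases hT' hW with hW' | hW'
      · obtain ⟨T, hT, rfl⟩ := hW'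
        exact ⟨T, hT, hW⟩
      · exact absurd hW' hWne
    have hSτ : S ⊆ τ := fun T hT => hT.1.1
    have hSU : ⋃₀ S ∈ τ := hτ.2 S hSτ
    have hSB : (⋃₀ S) ∩ B = U ∩ B := by
      apply Set.Subset.antisymm
      · rintro x ⟨⟨T, hT, hxT⟩, hxB⟩
        have := hT.1.2
        rw [← this]; exact ⟨hxT, hxB⟩
      · intro x hx
        obtain ⟨T, hT⟩ := hSne
        have := hT.1.2
        exact ⟨⟨T, hT, ((this ▸ hx : x ∈ T ∩ B)).1⟩, hx.2⟩
    have hkey : ⋃₀ T' = (⋃₀ S) \ I := by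
      apply Set.Subset.antisymm
      · rintro x ⟨W, hW, hx⟩
        rcases hT' hW with hW' | hW'
        · obtain ⟨T, hT, rfl⟩ := hW'
          exact ⟨⟨T, ⟨hT, hW⟩, hx.1⟩, hx.2⟩
        · simp only [Set.mem_singleton_iff] at hW'; subst hW'; exact absurd hx (Set.notMem_empty x)
      · rintro x ⟨⟨T, hT, hxT⟩, hxI⟩
        exact ⟨T \ I, hT.2, hxT, hxI⟩
    rw [hkey]
    exact Or.inl ⟨⋃₀ S, ⟨hSU, hSB⟩, rfl⟩
end

section
/- Let (Z,τ) be a T₀ pre-topological space and let V, W be open sets such that (V △ W) ⊆ V^{LC} or (V △ W) ⊆ W^{LC}, where △ denotes symmetric difference. Then V^{I} = W^{I} and V^{O} = W^{O} if and only if V = W. -/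
/-- `T` is T₀. -/
def PreT0 {Z : Type*} (T : Set (Set Z)) : Prop :=
  ∀ y z : Z, y ≠ z → ∃ W ∈ T, (y ∈ W ∧ z ∉ W) ∨ (z ∈ W ∧ y ∉ W)

/-- The locally inner closed points of an open set `W`. -/
def innerLC {Z : Type*} (T : Set (Set Z)) (W : Set Z) : Set Z :=
  {z ∈ W | W \ {z} ∈ T}

/-- The locally outer closed points of an open set `W`. -/
def outerLC {Z : Type*} (T : Set (Set Z)) (W : Set Z) : Set Z :=
  {z | z ∉ W ∧ W ∪ {z} ∈ T}

/-- The locally closed points of an open set `W`. -/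
def locLC {Z : Type*} (T : Set (Set Z)) (W : Set Z) : Set Z :=
  innerLC T W ∪ outerLC T W

/-- in a T₀ pre-topological space, if `V, W` are open with
`V △ W ⊆ V^{LC}` or `V △ W ⊆ W^{LC}`, then `V^I = W^I` and `V^O = W^O` iff `V = W`. -/
theorem stmt_5 {Z : Type*} (τ : Set (Set Z)) (hτ : IsPreTop τ) (hT0 : PreT0 τ)
    (V W : Set Z) (hV : V ∈ τ) (hW : W ∈ τ)
    (h : symmDiff V W ⊆ locLC τ V ∨ symmDiff V W ⊆ locLC τ W) :
    (innerLC τ V = innerLC τ W ∧ outerLC τ V = outerLC τ W) ↔ V = W := by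
  constructor
  · rintro ⟨hI, hO⟩
    ext z
    constructor
    · intro hzV
      by_contra hzW
      have hs : z ∈ symmDiff V W := Set.mem_symmDiff.mpr (Or.inl ⟨hzV, hzW⟩)
      rcases h with h | h
      · rcases h hs with hin | hout
        · have h2 : z ∈ innerLC τ W := hI ▸ hin
          exact hzW h2.1
        · exact hout.1 hzV
      · rcases h hs with hin | hout
        · exact hzW hin.1
        · have h2 : z ∈ outerLC τ V := hO ▸ hout
          exact h2.1 hzV
    · intro hzW
      by_contra hzV
      have hs : z ∈ symmDiff V W := Set.mem_symmDiff.mpr (Or.inr ⟨hzW, hzV⟩)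
      rcases h with h | h
      · rcases h hs with hin | hout
        · exact hzV hin.1
        · have h2 : z ∈ outerLC τ W := hO ▸ hout
          exact h2.1 hzW
      · rcases h hs with hin | hout
        · have h2 : z ∈ innerLC τ V := hI ▸ hin
          exact hzV h2.1
        · exact hout.1 hzW
  · rintro rfl; exact ⟨rfl, rfl⟩
end

section
/- A pre-topological space (Z,τ) is connected if and only if for every open cover {U_α}_{α∈J} of Z and every pair of points x₁, x₂ ∈ Z there exists a finite sequence α₁, α₂, …, α_k of elements of J such that x₁ ∈ U_{α₁}, x₂ ∈ U_{α_k}, and for all i, j ∈ {1,…,k}, U_{α_i} ∩ U_{α_j} ≠ ∅ if and only if |i − j| ≤ 1. -/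
universe u

/-- A pre-topological space is connected if it admits no separation into two disjoint
nonempty open sets. -/
def PreConnected {Z : Type*} (T : Set (Set Z)) : Prop :=
  ¬ ∃ O ∈ T, ∃ W ∈ T, O.Nonempty ∧ W.Nonempty ∧ O ∩ W = ∅ ∧ O ∪ W = Set.univ

/-- a pre-topological space `(Z, τ)` is connected iff for every open cover
`{U_α}_{α ∈ J}` of `Z` and all points `x₁, x₂` there is a finite sequence
`α₁, …, α_k` in `J` with `x₁ ∈ U_{α₁}`, `x₂ ∈ U_{α_k}`, and
`U_{α_i} ∩ U_{α_j} ≠ ∅ ↔ |i - j| ≤ 1`. -/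
theorem stmt_9 {Z : Type u} (τ : Set (Set Z)) (hτ : IsPreTop τ) :
    PreConnected τ ↔
      ∀ (J : Type u) (U : J → Set Z), (∀ α, U α ∈ τ) → (⋃ α, U α) = Set.univ →
        ∀ x₁ x₂ : Z, ∃ (k : ℕ) (a : Fin (k + 1) → J),
          x₁ ∈ U (a 0) ∧ x₂ ∈ U (a (Fin.last k)) ∧
          ∀ i j : Fin (k + 1), (U (a i) ∩ U (a j)).Nonempty ↔ Nat.dist i.val j.val ≤ 1 := by
  classical
  constructor
  · -- connected → chain condition
    intro hc J U hUτ hcov x₁ x₂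
    -- chains indexed by ℕ
    set C : ℕ → (ℕ → J) → Prop := fun k a =>
      x₁ ∈ U (a 0) ∧ x₂ ∈ U (a k) ∧ ∀ i < k, (U (a i) ∩ U (a (i+1))).Nonempty with hCdef
    have memU : ∀ z : Z, ∃ α, z ∈ U α := by
      intro z
      have : z ∈ ⋃ α, U α := hcov ▸ Set.mem_univ z
      simpa using this
    -- existence of some chain
    have hex : ∃ k, ∃ a, C k a := by
      by_contra hne
      push_neg at hne
      set R : J → Prop := fun β => ∃ k : ℕ, ∃ a : ℕ → J, x₁ ∈ U (a 0) ∧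
        (∀ i < k, (U (a i) ∩ U (a (i+1))).Nonempty) ∧ a k = β with hRdef
      set A := ⋃₀ {S | ∃ β, R β ∧ S = U β} with hAdef
      set B := ⋃₀ {S | ∃ β, ¬ R β ∧ S = U β} with hBdef
      have hA : A ∈ τ := hτ.2 _ (by rintro S ⟨β, -, rfl⟩; exact hUτ β)
      have hB : B ∈ τ := hτ.2 _ (by rintro S ⟨β, -, rfl⟩; exact hUτ β)
      obtain ⟨α₀, hx₁⟩ := memU x₁
      have hRα₀ : R α₀ := ⟨0, fun _ => α₀, hx₁, by omega, rfl⟩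
      have hAne : A.Nonempty := ⟨x₁, Set.mem_sUnion.2 ⟨U α₀, ⟨α₀, hRα₀, rfl⟩, hx₁⟩⟩
      have hunion : A ∪ B = Set.univ := by
        apply Set.eq_univ_of_forall
        intro z
        obtain ⟨β, hz⟩ := memU z
        by_cases h : R β
        · exact Or.inl (Set.mem_sUnion.2 ⟨U β, ⟨β, h, rfl⟩, hz⟩)
        · exact Or.inr (Set.mem_sUnion.2 ⟨U β, ⟨β, h, rfl⟩, hz⟩)
      have hdisj : A ∩ B = ∅ := by
        by_contra hAB
        obtain ⟨z, hzA, hzB⟩ := Set.nonempty_iff_ne_empty.2 hAB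
        obtain ⟨_, ⟨β, hRβ, rfl⟩, hzβ⟩ := hzA
        obtain ⟨_, ⟨γ, hRγ, rfl⟩, hzγ⟩ := hzB
        apply hRγ
        obtain ⟨k, a, h1, h3, hak⟩ := hRβ
        refine ⟨k + 1, fun m => if m ≤ k then a m else γ, by simpa using h1, ?_, by simp⟩
        intro i hi
        by_cases h : i + 1 ≤ k
        · simp only [if_pos h, if_pos (by omega : i ≤ k)]
          exact h3 i (by omega)
        · have hik : i = k := by omega
          subst hik
          simp only [if_pos (le_refl i), if_neg h]
          rw [hak]
          exact ⟨z, hzβ, hzγ⟩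
      -- B must be empty, else separation
      have hBe : ¬ B.Nonempty := by
        intro hBne
        exact hc ⟨A, hA, B, hB, hAne, hBne, hdisj, hunion⟩
      have hx₂A : x₂ ∈ A := by
        have : x₂ ∈ A ∪ B := hunion ▸ Set.mem_univ x₂
        rcases this with h | h
        · exact h
        · exact absurd ⟨x₂, h⟩ hBe
      obtain ⟨_, ⟨β, ⟨k, a, h1, h3, hak⟩, rfl⟩, hx₂⟩ := hx₂A
      exact hne k a ⟨h1, hak ▸ hx₂, h3⟩
    -- shortening lemma
    have shorten : ∀ k (a : ℕ → J), C k a → ∀ i j, i + 2 ≤ j → j ≤ k →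
        (U (a i) ∩ U (a j)).Nonempty → ∃ k', k' < k ∧ ∃ b, C k' b := by
      rintro k a ⟨h1, h2, h3⟩ i j hij hjk hint
      set d := j - i - 1 with hd
      refine ⟨k - d, by omega, fun m => if m ≤ i then a m else a (m + d), ?_, ?_, ?_⟩
      · simpa using h1
      · have hki : ¬ (k - d ≤ i) := by omega
        simp only [if_neg hki]
        have : k - d + d = k := by omega
        rw [this]; exact h2
      · intro m hm
        by_cases h : m + 1 ≤ i
        · simp only [if_pos h, if_pos (by omega : m ≤ i)]
          exact h3 m (by omega)
        · by_cases h' : m ≤ i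
          · have hmi : m = i := by omega
            simp only [if_pos h', if_neg h]
            have hj' : m + 1 + d = j := by omega
            rw [hmi, hj'] at *
            rw [hmi]
            exact hint
          · simp only [if_neg h, if_neg h']
            have : m + 1 + d = m + d + 1 := by omega
            rw [this]
            exact h3 (m + d) (by omega)
    -- minimal chain
    set k := Nat.find hex with hk
    obtain ⟨a, ha⟩ := Nat.find_spec hex
    have hmin : ∀ k' < k, ¬ ∃ b, C k' b := fun k' hk' => Nat.find_min hex hk'
    obtain ⟨h1, h2, h3⟩ := ha
    refine ⟨k, fun i => a i.val, by simpa using h1, by simpa using h2, ?_⟩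
    intro i j
    simp only
    constructor
    · intro hne2
      by_contra hdist
      rw [Nat.dist] at hdist
      push_neg at hdist
      rcases (by omega : i.val + 2 ≤ j.val ∨ j.val + 2 ≤ i.val) with hlt | hlt
      · obtain ⟨k', hk', hb⟩ := shorten k a ⟨h1, h2, h3⟩ i.val j.val hlt (by omega) hne2
        exact hmin k' hk' hb
      · obtain ⟨k', hk', hb⟩ := shorten k a ⟨h1, h2, h3⟩ j.val i.val hlt (by omega)
          (by rwa [Set.inter_comm])
        exact hmin k' hk' hb
    · intro hdist
      rw [Nat.dist] at hdist
      rcases (by omega : i.val = j.val ∨ i.val + 1 = j.val ∨ j.val + 1 = i.val) with he | he | he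
      · rw [show (j : ℕ) = i.val from he.symm, Set.inter_self]
        rcases Nat.eq_zero_or_pos k with hk0 | hk0
        · have : i.val = 0 := by omega
          rw [this]
          exact ⟨x₁, h1⟩
        · by_cases hik : i.val < k
          · obtain ⟨z, hz, -⟩ := h3 i.val hik
            exact ⟨z, hz⟩
          · have : i.val = k := by omega
            obtain ⟨z, -, hz⟩ := h3 (k - 1) (by omega)
            rw [this]
            have : k - 1 + 1 = k := by omega
            rw [this] at hz
            exact ⟨z, hz⟩
      · have : (j : ℕ) = i.val + 1 := he.symm
        rw [this]
        exact h3 i.val (by omega)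
      · have : (i : ℕ) = j.val + 1 := he.symm
        rw [this, Set.inter_comm]
        exact h3 j.val (by omega)
  · -- chain condition → connected
    intro h
    rintro ⟨O, hO, W, hW, ⟨p, hp⟩, ⟨q, hq⟩, hdisj, huniv⟩
    set U : ULift.{u} Bool → Set Z := fun b => if b.down then O else W with hU
    have hUopen : ∀ b, U b ∈ τ := by
      rintro ⟨b⟩; cases b <;> simpa [hU]
    have hUcov : (⋃ b, U b) = Set.univ := by
      apply Set.eq_univ_of_forall
      intro z
      have : z ∈ O ∪ W := huniv ▸ Set.mem_univ z
      rcases this with hz | hz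
      · exact Set.mem_iUnion.2 ⟨⟨true⟩, by simpa [hU]⟩
      · exact Set.mem_iUnion.2 ⟨⟨false⟩, by simpa [hU]⟩
    obtain ⟨k, a, h1, h2, h3⟩ := h (ULift Bool) U hUopen hUcov p q
    have key : ∀ n (hn : n ≤ k), (a ⟨n, by omega⟩).down = (a 0).down := by
      intro n
      induction n with
      | zero => intro _; rfl
      | succ m ih =>
        intro hn
        have hm : m ≤ k := by omega
        have hint : (U (a ⟨m, by omega⟩) ∩ U (a ⟨m + 1, by omega⟩)).Nonempty := by
          apply (h3 ⟨m, by omega⟩ ⟨m + 1, by omega⟩).2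
          simp [Nat.dist]
        have : (a ⟨m + 1, by omega⟩).down = (a ⟨m, by omega⟩).down := by
          by_contra hne
          obtain ⟨z, hz1, hz2⟩ := hint
          rcases Bool.eq_false_or_eq_true (a ⟨m, by omega⟩).down with hb | hb <;>
            rcases Bool.eq_false_or_eq_true (a ⟨m + 1, by omega⟩).down with hb' | hb' <;>
            simp [hU, hb, hb'] at hz1 hz2 hne
          all_goals first
            | exact Set.eq_empty_iff_forall_notMem.1 hdisj z ⟨hz1, hz2⟩
            | exact Set.eq_empty_iff_forall_notMem.1 hdisj z ⟨hz2, hz1⟩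
        rw [this, ih hm]
    have hlast : (a (Fin.last k)).down = (a 0).down := by
      have := key k le_rfl
      simpa [Fin.last] using this
    rcases Bool.eq_false_or_eq_true (a 0).down with hb | hb
    · -- U (a 0) = O, then q ∈ O ∩ W
      have hqO : q ∈ O := by simpa [hU, hlast, hb] using h2
      exact Set.eq_empty_iff_forall_notMem.1 hdisj q ⟨hqO, hq⟩
    · -- U (a 0) = W, but p ∈ U (a 0) and p ∈ O
      have hpW : p ∈ W := by simpa [hU, hb] using h1
      exact Set.eq_empty_iff_forall_notMem.1 hdisj p ⟨hp, hpW⟩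
end

section
/- Let (Z,τ) be a finite pre-topological space. The following are equivalent: (1) Z is tight 1-connected; (2) for any two distinct open sets U and W, (U △ W) ∩ U^{LC} ≠ ∅; (3) any two open sets U and W satisfying U^{I} ⊆ W and U^{O} ⊆ Z \ W are equal. -/
/-- Tight 1-connectedness: any two distinct open sets `V, W` are joined by a chain of
open sets `O₀ = V, …, O_m = W` with `|O_i △ O_{i+1}| = 1`, where `m = |V △ W|`. -/
def TightOneConnected {Z : Type*} (T : Set (Set Z)) : Prop :=
  ∀ V ∈ T, ∀ W ∈ T, V ≠ W →
    ∃ O : Fin ((symmDiff V W).ncard + 1) → Set Z,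
      O 0 = V ∧ O (Fin.last ((symmDiff V W).ncard)) = W ∧ (∀ i, O i ∈ T) ∧
      ∀ i : Fin ((symmDiff V W).ncard),
        (symmDiff (O i.castSucc) (O i.succ)).ncard = 1

lemma symmDiff_singleton_mem' {Z : Type*} (U : Set Z) (z : Z) (h : z ∈ U) :
    symmDiff U {z} = U \ {z} := by
  ext x; simp only [Set.mem_symmDiff, Set.mem_diff, Set.mem_singleton_iff]
  constructor
  · rintro (⟨h1, h2⟩ | ⟨rfl, h2⟩) <;> tauto
  · tauto

lemma symmDiff_singleton_notMem' {Z : Type*} (U : Set Z) (z : Z) (h : z ∉ U) :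
    symmDiff U {z} = U ∪ {z} := by
  ext x; simp only [Set.mem_symmDiff, Set.mem_union, Set.mem_singleton_iff]
  constructor
  · tauto
  · rintro (h1 | rfl) <;> [left; right] <;> constructor <;> try tauto
    rintro rfl; exact h h1

lemma locLC_iff' {Z : Type*} (τ : Set (Set Z)) (U : Set Z) (z : Z) :
    z ∈ locLC τ U ↔ symmDiff U {z} ∈ τ := by
  by_cases h : z ∈ U
  · rw [symmDiff_singleton_mem' U z h]
    simp [locLC, innerLC, outerLC, h]
  · rw [symmDiff_singleton_notMem' U z h]
    simp [locLC, innerLC, outerLC, h]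

lemma sd_move' {Z : Type*} (U W : Set Z) (z : Z) (h : z ∈ symmDiff U W) :
    symmDiff (symmDiff U {z}) W = symmDiff U W \ {z} := by
  rw [symmDiff_right_comm]
  exact symmDiff_singleton_mem' _ z h

lemma chain_bound' {Z : Type*} [Finite Z] {m : ℕ} (O : Fin (m + 1) → Set Z)
    (hstep : ∀ i : Fin m, (symmDiff (O i.castSucc) (O i.succ)).ncard = 1) :
    ∀ k : ℕ, ∀ i : Fin (m + 1), (i : ℕ) + k = m →
      (symmDiff (O i) (O (Fin.last m))).ncard ≤ k := by
  intro k
  induction k with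
  | zero =>
    intro i hi
    have : i = Fin.last m := by
      apply Fin.ext; simp [Fin.val_last]; omega
    subst this
    simp [symmDiff_self]
  | succ k ih =>
    intro i hi
    have hlt : (i : ℕ) < m := by omega
    set j : Fin m := ⟨(i : ℕ), hlt⟩ with hj
    have hic : i = j.castSucc := by apply Fin.ext; simp [hj]
    have hsub : symmDiff (O i) (O (Fin.last m)) ⊆
        symmDiff (O i) (O j.succ) ∪ symmDiff (O j.succ) (O (Fin.last m)) :=
      symmDiff_triangle _ _ _
    have h1 : (symmDiff (O i) (O j.succ)).ncard = 1 := by rw [hic]; exact hstep j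
    have h2 : (symmDiff (O j.succ) (O (Fin.last m))).ncard ≤ k := by
      apply ih j.succ
      simp [Fin.val_succ, hj]; omega
    calc (symmDiff (O i) (O (Fin.last m))).ncard
        ≤ (symmDiff (O i) (O j.succ) ∪ symmDiff (O j.succ) (O (Fin.last m))).ncard :=
          Set.ncard_le_ncard hsub (Set.toFinite _)
      _ ≤ (symmDiff (O i) (O j.succ)).ncard + (symmDiff (O j.succ) (O (Fin.last m))).ncard :=
          Set.ncard_union_le _ _
      _ ≤ 1 + k := by omega
      _ = k + 1 := by omega

lemma chain_exists' {Z : Type*} [Finite Z] (τ : Set (Set Z))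
    (h2 : ∀ U ∈ τ, ∀ W ∈ τ, U ≠ W → (symmDiff U W ∩ locLC τ U).Nonempty) :
    ∀ n : ℕ, ∀ U ∈ τ, ∀ W ∈ τ, (symmDiff U W).ncard = n + 1 →
      ∃ O : Fin (n + 1 + 1) → Set Z,
        O 0 = U ∧ O (Fin.last (n + 1)) = W ∧ (∀ i, O i ∈ τ) ∧
        ∀ i : Fin (n + 1), (symmDiff (O i.castSucc) (O i.succ)).ncard = 1 := by
  intro n
  induction n with
  | zero =>
    intro U hU W hW hcard
    refine ⟨![U, W], rfl, rfl, ?_, ?_⟩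
    · intro i; fin_cases i <;> simpa
    · intro i; fin_cases i; simpa using hcard
  | succ n ih =>
    intro U hU W hW hcard
    have hne : U ≠ W := by
      intro h; rw [h, symmDiff_self] at hcard; simp at hcard
    obtain ⟨z, hzUW, hzLC⟩ := h2 U hU W hW hne
    have hU' : symmDiff U {z} ∈ τ := (locLC_iff' τ U z).mp hzLC
    have hsd := sd_move' U W z hzUW
    have hcard' : (symmDiff (symmDiff U {z}) W).ncard = n + 1 := by
      rw [hsd]
      have := Set.ncard_diff_singleton_add_one hzUW (Set.toFinite (symmDiff U W))
      omega
    obtain ⟨O', hO'0, hO'last, hO'mem, hO'step⟩ := ih (symmDiff U {z}) hU' W hW hcard'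
    refine ⟨Fin.cons U O', Fin.cons_zero _ _, ?_, ?_, ?_⟩
    · rw [← Fin.succ_last, Fin.cons_succ, hO'last]
    · intro i
      refine Fin.cases ?_ ?_ i
      · simpa using hU
      · intro j; rw [Fin.cons_succ]; exact hO'mem j
    · intro i
      refine Fin.cases ?_ ?_ i
      · have h0 : (Fin.castSucc (0 : Fin (n+1+1))) = 0 := rfl
        rw [h0, Fin.cons_zero, Fin.cons_succ, hO'0, symmDiff_symmDiff_cancel_left]
        simp
      · intro j
        rw [← Fin.succ_castSucc, Fin.cons_succ, Fin.cons_succ]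
        exact hO'step j

/-- for a finite pre-topological space `(Z, τ)` the following are
equivalent: (1) `Z` is tight 1-connected; (2) `(U △ W) ∩ U^{LC} ≠ ∅` for any two distinct
open sets `U, W`; (3) any two open sets `U, W` with `U^I ⊆ W` and `U^O ⊆ Z \ W` are
equal. -/
theorem stmt_10 {Z : Type*} [Finite Z] (τ : Set (Set Z)) (hτ : IsPreTop τ) :
    (TightOneConnected τ ↔
      ∀ U ∈ τ, ∀ W ∈ τ, U ≠ W → (symmDiff U W ∩ locLC τ U).Nonempty) ∧
    ((∀ U ∈ τ, ∀ W ∈ τ, U ≠ W → (symmDiff U W ∩ locLC τ U).Nonempty) ↔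
      ∀ U ∈ τ, ∀ W ∈ τ, innerLC τ U ⊆ W → outerLC τ U ⊆ Wᶜ → U = W) := by
  constructor
  · constructor
    · -- (1) → (2)
      intro h1 U hU W hW hne
      obtain ⟨O, hO0, hOlast, hOmem, hOstep⟩ := h1 U hU W hW hne
      have hm1 : 0 < (symmDiff U W).ncard := by
        have hne' : (symmDiff U W).Nonempty := by
          rw [Set.nonempty_iff_ne_empty]
          intro h
          exact hne (symmDiff_eq_bot.mp h)
        exact (Set.ncard_pos (Set.toFinite _)).mpr hne'
      have hstep0 := hOstep ⟨0, hm1⟩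
      have hc0 : (Fin.castSucc (⟨0, hm1⟩ : Fin ((symmDiff U W).ncard))) = 0 := by
        apply Fin.ext; simp
      rw [hc0, hO0] at hstep0
      obtain ⟨z, hz⟩ := Set.ncard_eq_one.mp hstep0
      have hO1 : O (Fin.succ ⟨0, hm1⟩) = symmDiff U {z} := by
        have := congrArg (fun s => symmDiff U s) hz
        simpa [symmDiff_symmDiff_cancel_left] using this
      have hzLC : z ∈ locLC τ U := by
        rw [locLC_iff', ← hO1]; exact hOmem _
      refine ⟨z, ?_, hzLC⟩
      by_contra hznot
      have hbig : (symmDiff (O (Fin.succ ⟨0, hm1⟩)) W).ncard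
          = (symmDiff U W).ncard + 1 := by
        rw [hO1, symmDiff_right_comm, symmDiff_singleton_notMem' _ z hznot,
          Set.union_singleton, Set.ncard_insert_of_notMem hznot (Set.toFinite _)]
      have hsmall : (symmDiff (O (Fin.succ ⟨0, hm1⟩))
          (O (Fin.last ((symmDiff U W).ncard)))).ncard ≤ (symmDiff U W).ncard - 1 := by
        apply chain_bound' O hOstep ((symmDiff U W).ncard - 1) (Fin.succ ⟨0, hm1⟩)
        simp [Fin.val_succ]
        omega
      rw [hOlast] at hsmall
      omega
    · -- (2) → (1)
      intro h2 U hU W hW hne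
      have hm1 : 1 ≤ (symmDiff U W).ncard := by
        have hne' : (symmDiff U W).Nonempty := by
          rw [Set.nonempty_iff_ne_empty]
          intro h
          exact hne (symmDiff_eq_bot.mp h)
        exact (Set.ncard_pos (Set.toFinite _)).mpr hne'
      obtain ⟨n, hn⟩ : ∃ n, (symmDiff U W).ncard = n + 1 :=
        ⟨(symmDiff U W).ncard - 1, by omega⟩
      obtain ⟨O, h0, hl, hmem, hs⟩ := chain_exists' τ h2 n U hU W hW hn
      have hc : (symmDiff U W).ncard + 1 = n + 1 + 1 := by omega
      refine ⟨fun i => O (Fin.cast hc i), ?_, ?_, fun i => hmem _, fun i => ?_⟩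
      · have : Fin.cast hc (0 : Fin ((symmDiff U W).ncard + 1)) = 0 := by
          apply Fin.ext; simp
        show O (Fin.cast hc 0) = U
        rw [this, h0]
      · have : Fin.cast hc (Fin.last ((symmDiff U W).ncard)) = Fin.last (n + 1) := by
          apply Fin.ext; simp [hn]
        show O (Fin.cast hc (Fin.last ((symmDiff U W).ncard))) = W
        rw [this, hl]
      · have e1 : Fin.cast hc i.castSucc
            = (Fin.cast (by omega : (symmDiff U W).ncard = n + 1) i).castSucc := by
          apply Fin.ext; simp
        have e2 : Fin.cast hc i.succ
            = (Fin.cast (by omega : (symmDiff U W).ncard = n + 1) i).succ := by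
          apply Fin.ext; simp
        show (symmDiff (O (Fin.cast hc i.castSucc)) (O (Fin.cast hc i.succ))).ncard = 1
        rw [e1, e2]
        exact hs _
  · constructor
    · -- (2) → (3)
      intro h2 U hU W hW hIn hOut
      by_contra hne
      obtain ⟨z, hzUW, hzLC⟩ := h2 U hU W hW hne
      rcases hzLC with hI | hO
      · have hzU : z ∈ U := hI.1
        have hzW : z ∈ W := hIn hI
        rw [Set.mem_symmDiff] at hzUW
        rcases hzUW with h | h
        · exact h.2 hzW
        · exact h.2 hzU
      · have hzU : z ∉ U := hO.1
        have hzW : z ∉ W := hOut hO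
        rw [Set.mem_symmDiff] at hzUW
        rcases hzUW with h | h
        · exact hzU h.1
        · exact hzW h.1
    · -- (3) → (2)
      intro h3 U hU W hW hne
      by_contra hempty
      rw [Set.not_nonempty_iff_eq_empty] at hempty
      apply hne
      apply h3 U hU W hW
      · intro z hz
        by_contra hzW
        have hzU : z ∈ U := hz.1
        have hmem : z ∈ symmDiff U W := by
          rw [Set.mem_symmDiff]; left; exact ⟨hzU, hzW⟩
        have : z ∈ symmDiff U W ∩ locLC τ U := ⟨hmem, Or.inl hz⟩
        rw [hempty] at this
        exact this
      · intro z hz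
        simp only [Set.mem_compl_iff]
        intro hzW
        have hzU : z ∉ U := hz.1
        have hmem : z ∈ symmDiff U W := by
          rw [Set.mem_symmDiff]; right; exact ⟨hzW, hzU⟩
        have : z ∈ symmDiff U W ∩ locLC τ U := ⟨hmem, Or.inr hz⟩
        rw [hempty] at this
        exact this
end

section
/- Let (Q,S,μ) be a skill multimap such that μ(t) is a finite set for every t ∈ Q, and let (Q,𝓗) be the knowledge structure delineated by (Q,S,μ). Then 𝓗 is a knowledge space (i.e., 𝓗 is closed under arbitrary unions) if and only if for every H ⊆ Q: H ∈ 𝓗 if and only if there exists 𝒫_H ⊆ ⋃_{t∈Q} μ_M(t) such that H = ⋃_{D∈𝒫_H} p(D). -/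
/-- The problem function induced by a skill multimap `μ`:
`p(R) = {g : ∃ R_g ∈ μ(g), R_g ⊆ R}`. -/
def problemFun {Q S : Type*} (μ : Q → Set (Set S)) (R : Set S) : Set Q :=
  {g | ∃ Rg ∈ μ g, Rg ⊆ R}

/-- The knowledge structure delineated by the skill multimap `μ`: `{p(R) : R ⊆ S}`. -/
def delineated {Q S : Type*} (μ : Q → Set (Set S)) : Set (Set Q) :=
  Set.range (problemFun μ)

/-- `μ_M(t)`: the set of minimal (w.r.t. inclusion) competencies in `μ(t)`. -/
def muM {Q S : Type*} (μ : Q → Set (Set S)) (t : Q) : Set (Set S) :=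
  {C ∈ μ t | ∀ D ∈ μ t, D ⊆ C → D = C}

/-- A family of subsets of `Q` is a knowledge space if it contains `∅` and `Q` and is
closed under arbitrary unions. -/
def IsKnowledgeSpace {Q : Type*} (𝓗 : Set (Set Q)) : Prop :=
  ∅ ∈ 𝓗 ∧ Set.univ ∈ 𝓗 ∧ ∀ 𝓗' ⊆ 𝓗, ⋃₀ 𝓗' ∈ 𝓗

/-- for a skill multimap `(Q, S, μ)` with each `μ(t)` finite, the delineated
knowledge structure `𝓗` is a knowledge space iff for every `H ⊆ Q`: `H ∈ 𝓗` iff there is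
`𝒫_H ⊆ ⋃_{t ∈ Q} μ_M(t)` with `H = ⋃_{D ∈ 𝒫_H} p(D)`. -/
theorem stmt_13 {Q S : Type*} [Nonempty Q] [Nonempty S] (μ : Q → Set (Set S))
    (hμne : ∀ t, (μ t).Nonempty) (hμmem : ∀ t, ∀ C ∈ μ t, C.Nonempty)
    (hfin : ∀ t, (μ t).Finite) :
    IsKnowledgeSpace (delineated μ) ↔
      ∀ H : Set Q, (H ∈ delineated μ ↔
        ∃ P : Set (Set S), P ⊆ {C | ∃ t : Q, C ∈ muM μ t} ∧
          H = ⋃ D ∈ P, problemFun μ D) := by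
  -- every competency contains a minimal competency
  have hmin : ∀ t, ∀ C ∈ μ t, ∃ M ∈ muM μ t, M ⊆ C := by
    intro t C hC
    have hfs : ({D ∈ μ t | D ⊆ C}).Finite := (hfin t).subset (fun D hD => hD.1)
    obtain ⟨M, hM, hMmin⟩ : ∃ M ∈ {D ∈ μ t | D ⊆ C}, ∀ D ∈ {D ∈ μ t | D ⊆ C}, D ⊆ M → M = D := by
      obtain ⟨M, hM, hMmin⟩ := hfs.exists_minimal ⟨C, hC, subset_rfl⟩
      exact ⟨M, hM, fun D hD hDM => le_antisymm (hMmin hD hDM) hDM⟩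
    refine ⟨M, ⟨hM.1, fun D hD hDM => ?_⟩, hM.2⟩
    exact (hMmin D ⟨hD, hDM.trans hM.2⟩ hDM).symm
  -- monotonicity
  have hmono : ∀ {R R' : Set S}, R ⊆ R' → problemFun μ R ⊆ problemFun μ R' := by
    intro R R' h g hg
    obtain ⟨Rg, hRg, hsub⟩ := hg
    exact ⟨Rg, hRg, hsub.trans h⟩
  -- representation of p(R) via minimal competencies
  have hrep : ∀ R : Set S, problemFun μ R =
      ⋃ D ∈ {D | (∃ t : Q, D ∈ muM μ t) ∧ D ⊆ R}, problemFun μ D := by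
    intro R
    ext g
    simp only [Set.mem_iUnion, Set.mem_setOf_eq]
    constructor
    · rintro ⟨Rg, hRg, hsub⟩
      obtain ⟨M, hM, hMsub⟩ := hmin g Rg hRg
      exact ⟨M, ⟨⟨g, hM⟩, hMsub.trans hsub⟩, ⟨M, hM.1, subset_rfl⟩⟩
    · rintro ⟨D, ⟨_, hDR⟩, hg⟩
      exact hmono hDR hg
  constructor
  · rintro ⟨-, -, hclosed⟩ H
    constructor
    · rintro ⟨R, rfl⟩
      exact ⟨{D | (∃ t : Q, D ∈ muM μ t) ∧ D ⊆ R}, fun D hD => hD.1, hrep R⟩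
    · rintro ⟨P, hP, rfl⟩
      have : ⋃ D ∈ P, problemFun μ D = ⋃₀ ((problemFun μ) '' P) := by
        rw [Set.sUnion_image]
      rw [this]
      apply hclosed
      rintro _ ⟨D, -, rfl⟩
      exact ⟨D, rfl⟩
  · intro hchar
    refine ⟨⟨∅, ?_⟩, ⟨Set.univ, ?_⟩, ?_⟩
    · ext g
      simp only [problemFun, Set.mem_setOf_eq, Set.mem_empty_iff_false, iff_false]
      rintro ⟨Rg, hRg, hsub⟩
      exact (hμmem g Rg hRg).ne_empty (Set.subset_empty_iff.mp hsub)
    · ext g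
      simp only [problemFun, Set.mem_setOf_eq, Set.mem_univ, iff_true]
      obtain ⟨C, hC⟩ := hμne g
      exact ⟨C, hC, Set.subset_univ C⟩
    · intro 𝓗' h𝓗'
      choose f hf1 hf2 using fun (H : Set Q) (hH : H ∈ 𝓗') =>
        ((hchar H).mp (h𝓗' hH))
      rw [hchar]
      refine ⟨⋃ H ∈ 𝓗', ⋃ (hH : H ∈ 𝓗'), f H hH, ?_, ?_⟩
      · intro D hD
        simp only [Set.mem_iUnion] at hD
        obtain ⟨H, hH, hH', hD⟩ := hD
        exact hf1 H hH' hD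
      · ext g
        simp only [Set.mem_sUnion, Set.mem_iUnion]
        constructor
        · rintro ⟨H, hH, hg⟩
          rw [hf2 H hH] at hg
          simp only [Set.mem_iUnion] at hg
          obtain ⟨D, hD, hg⟩ := hg
          exact ⟨D, ⟨H, hH, hH, hD⟩, hg⟩
        · rintro ⟨D, ⟨H, hH, hH2, hD⟩, hg⟩
          refine ⟨H, hH, ?_⟩
          rw [hf2 H hH]
          exact Set.mem_biUnion hD hg
end

section
/- Let (Q,S,μ) be a skill multimap such that μ(t) is a finite set for every t ∈ Q, and let (Q,𝓗) be the delineated knowledge structure. Suppose that for every subset Q' ⊆ Q, every g ∈ Q, and every family ℳ ⊆ ⋃_{t∈Q'} μ(t), the following condition (⋆) holds: if C \ D ≠ ∅ for every C ∈ μ_M(g) and every D ∈ ℳ, then C \ ⋃ℳ ≠ ∅ for every C ∈ μ_M(g). Then (Q,𝓗) is a knowledge space. -/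
/-- for a skill multimap `(Q, S, μ)` with each `μ(t)` finite, if for every
`Q' ⊆ Q`, `g ∈ Q` and `ℳ ⊆ ⋃_{t ∈ Q'} μ(t)` the condition (⋆) holds (if `C \ D ≠ ∅` for
all `C ∈ μ_M(g)`, `D ∈ ℳ`, then `C \ ⋃ℳ ≠ ∅` for all `C ∈ μ_M(g)`), then the delineated
structure is a knowledge space. -/
theorem stmt_14 {Q S : Type*} [Nonempty Q] [Nonempty S] (μ : Q → Set (Set S))
    (hμne : ∀ t, (μ t).Nonempty) (hμmem : ∀ t, ∀ C ∈ μ t, C.Nonempty)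
    (hfin : ∀ t, (μ t).Finite)
    (hstar : ∀ (Q' : Set Q) (g : Q) (M : Set (Set S)),
      M ⊆ {C | ∃ t ∈ Q', C ∈ μ t} →
      (∀ C ∈ muM μ g, ∀ D ∈ M, (C \ D).Nonempty) →
      ∀ C ∈ muM μ g, (C \ ⋃₀ M).Nonempty) :
    IsKnowledgeSpace (delineated μ) := by
  classical
  refine ⟨⟨∅, ?_⟩, ⟨Set.univ, ?_⟩, ?_⟩
  · ext g
    simp only [problemFun, Set.mem_setOf_eq, Set.mem_empty_iff_false, iff_false]
    rintro ⟨Rg, hRg, hsub⟩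
    exact (hμmem g Rg hRg).ne_empty (Set.subset_empty_iff.mp hsub)
  · ext g
    simp only [problemFun, Set.mem_setOf_eq, Set.mem_univ, iff_true]
    obtain ⟨C, hC⟩ := hμne g
    exact ⟨C, hC, Set.subset_univ C⟩
  · intro 𝓗' h𝓗'
    choose f hf using fun K (hK : K ∈ 𝓗') => h𝓗' hK
    set M : Set (Set S) := {C | ∃ K, ∃ hK : K ∈ 𝓗', ∃ t ∈ K, C ∈ μ t ∧ C ⊆ f K hK}
      with hM
    refine ⟨⋃₀ M, ?_⟩
    ext g
    constructor
    · rintro ⟨C0, hC0, hsub⟩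
      -- find a minimal competency below C0
      have hs : {D | D ∈ μ g ∧ D ⊆ C0}.Finite := (hfin g).subset fun D hD => hD.1
      obtain ⟨Cm, hCm, hmin⟩ : ∃ Cm ∈ {D | D ∈ μ g ∧ D ⊆ C0}, ∀ D ∈ {D | D ∈ μ g ∧ D ⊆ C0},
          id D ≤ id Cm → id Cm = id D := by
        obtain ⟨Cm, hCm, hmin⟩ := Set.Finite.exists_minimalFor id _ hs ⟨C0, hC0, subset_rfl⟩
        exact ⟨Cm, hCm, fun D hD h => le_antisymm (hmin hD h) h⟩
      have hCmM : Cm ∈ muM μ g := by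
        refine ⟨hCm.1, fun D hD hDCm => ?_⟩
        exact (hmin D ⟨hD, hDCm.trans hCm.2⟩ hDCm).symm
      have hMsub : M ⊆ {C | ∃ t ∈ ⋃₀ 𝓗', C ∈ μ t} := by
        rintro C ⟨K, hK, t, htK, hCt, -⟩
        exact ⟨t, ⟨K, hK, htK⟩, hCt⟩
      have hempty : ¬ (Cm \ ⋃₀ M).Nonempty := by
        rw [Set.not_nonempty_iff_eq_empty, Set.diff_eq_empty]
        exact hCm.2.trans hsub
      have : ¬ (∀ C ∈ muM μ g, ∀ D ∈ M, (C \ D).Nonempty) := by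
        intro h
        exact hempty (hstar (⋃₀ 𝓗') g M hMsub h Cm hCmM)
      push_neg at this
      obtain ⟨C', hC', D, hD, hCD⟩ := this
      rw [Set.diff_eq_empty] at hCD
      obtain ⟨K, hK, t, htK, hDt, hDsub⟩ := hD
      have : g ∈ problemFun μ (f K hK) := ⟨C', hC'.1, hCD.trans hDsub⟩
      rw [hf K hK] at this
      exact ⟨K, hK, this⟩
    · rintro ⟨K, hK, hgK⟩
      have hgK' := hgK
      rw [← hf K hK] at hgK'
      obtain ⟨C, hC, hCsub⟩ := hgK'
      exact ⟨C, hC, fun x hx => ⟨C, ⟨K, hK, g, hgK, hC, hCsub⟩, hx⟩⟩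
end

section
/- Let (Q,S,μ) be a skill multimap such that μ(r) is a finite set for every r ∈ Q, and let (Q,𝓗) be the delineated knowledge structure. Then (Q,𝓗) is completely discriminative if and only if for any distinct h, q ∈ Q there exist C_h ∈ μ_M(h) and C_q ∈ μ_M(q) such that for every g ∈ Q, at most one of the conditions C_h ⋐ μ_M(g) and C_q ⋐ μ_M(g) holds. -/
/-- `C ⋐ 𝒲`: the set `C` is refined by the family `𝒲`, i.e. some `W ∈ 𝒲` satisfies
`W ⊆ C`. -/
def RefinedBy {S : Type*} (C : Set S) (𝒲 : Set (Set S)) : Prop :=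
  ∃ W ∈ 𝒲, W ⊆ C

/-- A knowledge structure is completely discriminative if any two distinct items possess
disjoint states containing them. -/
def CompletelyDiscriminative {Q : Type*} (𝓗 : Set (Set Q)) : Prop :=
  ∀ p q : Q, p ≠ q → ∃ H ∈ 𝓗, ∃ L ∈ 𝓗, p ∈ H ∧ q ∈ L ∧ H ∩ L = ∅

lemma exists_min_comp {Q S : Type*} (μ : Q → Set (Set S)) (hfin : ∀ r, (μ r).Finite)
    (t : Q) {C : Set S} (hC : C ∈ μ t) : ∃ D ∈ muM μ t, D ⊆ C := by
  obtain ⟨a, ⟨haμ, haC⟩, hmin⟩ := Set.Finite.exists_minimalFor id {D ∈ μ t | D ⊆ C}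
    ((hfin t).subset (Set.sep_subset _ _)) ⟨C, hC, subset_rfl⟩
  exact ⟨a, ⟨haμ, fun D hD hDa => le_antisymm hDa (hmin ⟨hD, hDa.trans haC⟩ hDa)⟩, haC⟩

/-- for a skill multimap `(Q, S, μ)` with each `μ(r)` finite, the delineated
knowledge structure is completely discriminative iff for any distinct `h, q ∈ Q` there
exist `C_h ∈ μ_M(h)` and `C_q ∈ μ_M(q)` such that for every `g ∈ Q` at most one of
`C_h ⋐ μ_M(g)` and `C_q ⋐ μ_M(g)` holds. -/
theorem stmt_15 {Q S : Type*} [Nonempty Q] [Nonempty S] (μ : Q → Set (Set S))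
    (hμne : ∀ t, (μ t).Nonempty) (hμmem : ∀ t, ∀ C ∈ μ t, C.Nonempty)
    (hfin : ∀ r, (μ r).Finite) :
    CompletelyDiscriminative (delineated μ) ↔
      ∀ h q : Q, h ≠ q → ∃ Ch ∈ muM μ h, ∃ Cq ∈ muM μ q,
        ∀ g : Q, ¬ (RefinedBy Ch (muM μ g) ∧ RefinedBy Cq (muM μ g)) := by
  constructor
  · intro hcd h q hne
    obtain ⟨H, ⟨R1, rfl⟩, L, ⟨R2, rfl⟩, hh, hq, hdisj⟩ := hcd h q hne
    obtain ⟨W, hW, hWR⟩ := hh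
    obtain ⟨Ch, hChM, hChW⟩ := exists_min_comp μ hfin h hW
    obtain ⟨V, hV, hVR⟩ := hq
    obtain ⟨Cq, hCqM, hCqV⟩ := exists_min_comp μ hfin q hV
    refine ⟨Ch, hChM, Cq, hCqM, fun g hg => ?_⟩
    obtain ⟨⟨A, hA, hACh⟩, ⟨B, hB, hBCq⟩⟩ := hg
    have hg1 : g ∈ problemFun μ R1 := ⟨A, hA.1, hACh.trans (hChW.trans hWR)⟩
    have hg2 : g ∈ problemFun μ R2 := ⟨B, hB.1, hBCq.trans (hCqV.trans hVR)⟩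
    exact Set.eq_empty_iff_forall_notMem.mp hdisj g ⟨hg1, hg2⟩
  · intro hyp p q hne
    obtain ⟨Ch, hChM, Cq, hCqM, hone⟩ := hyp p q hne
    refine ⟨problemFun μ Ch, ⟨Ch, rfl⟩, problemFun μ Cq, ⟨Cq, rfl⟩,
      ⟨Ch, hChM.1, subset_rfl⟩, ⟨Cq, hCqM.1, subset_rfl⟩, ?_⟩
    ext g
    simp only [Set.mem_inter_iff, Set.mem_empty_iff_false, iff_false]
    rintro ⟨⟨A, hA, hACh⟩, ⟨B, hB, hBCq⟩⟩
    obtain ⟨A', hA', hA'A⟩ := exists_min_comp μ hfin g hA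
    obtain ⟨B', hB', hB'B⟩ := exists_min_comp μ hfin g hB
    exact hone g ⟨⟨A', hA', hA'A.trans hACh⟩, ⟨B', hB', hB'B.trans hBCq⟩⟩
end

section
/- Let X be a finite T₀ topological space. Then for every nonempty open set U in X there exists a point t ∈ U such that U \ {t} is open in X (i.e., the family of open sets of X is an antimatroid). -/
/-! A point `t` of `U` that is maximal in `U` for the specialization order (no other point of
`U` lies in `closure {t}`) can be removed: `U \ {t} = U \ closure {t}` is open. In a finite
space such a point exists, since `closure {x}` attains a minimal value on `U`, and the T₀ axiom
makes a point with minimal closure maximal. -/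

theorem IsOpen.diff_singleton_of_closure_inter_subset {X : Type*} [TopologicalSpace X]
    {U : Set X} {t : X} (hU : IsOpen U) (ht : closure {t} ∩ U ⊆ {t}) :
    IsOpen (U \ {t}) := by
  have hdiff : U \ {t} = U \ closure {t} := by
    ext x
    constructor
    · rintro ⟨hxU, hxt⟩
      exact ⟨hxU, fun hx => hxt (ht ⟨hx, hxU⟩)⟩
    · rintro ⟨hxU, hx⟩
      exact ⟨hxU, fun hxt => hx (hxt ▸ subset_closure rfl)⟩
  rw [hdiff]
  exact hU.sdiff isClosed_closure

theorem Set.Finite.exists_closure_singleton_inter_subset {X : Type*} [TopologicalSpace X]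
    [T0Space X] {U : Set X} (hfin : U.Finite) (hne : U.Nonempty) :
    ∃ t ∈ U, closure {t} ∩ U ⊆ {t} := by
  obtain ⟨t, htU, hmin⟩ := hfin.exists_minimalFor (fun x : X => closure ({x} : Set X)) U hne
  refine ⟨t, htU, fun x ⟨hx, hxU⟩ => ?_⟩
  have hsub : closure {x} ⊆ closure {t} :=
    specializes_iff_closure_subset.1 (specializes_iff_mem_closure.2 hx)
  have hinsep : Inseparable t x :=
    inseparable_iff_closure_eq.2 (Set.Subset.antisymm (hmin hxU hsub) hsub)
  exact hinsep.eq.symm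

/-- in a finite T₀ topological space, every nonempty open set `U` has a
point `t` with `U \ {t}` open (the lattice of open sets is an antimatroid). -/
theorem stmt_16 {X : Type*} [TopologicalSpace X] [Finite X] [T0Space X]
    (U : Set X) (hU : IsOpen U) (hne : U.Nonempty) :
    ∃ t ∈ U, IsOpen (U \ {t}) := by
  obtain ⟨t, htU, ht⟩ := U.toFinite.exists_closure_singleton_inter_subset hne
  exact ⟨t, htU, hU.diff_singleton_of_closure_inter_subset ht⟩
end

section
/- Let X be a finite T₀ topological space. Then X is tight 1-connected: for any two distinct open sets O and W there exist open sets O₀ = O, O₁, …, O_m = W such that |O_i △ O_{i+1}| = 1 for every 0 ≤ i ≤ m−1, where m = |O △ W| and △ denotes symmetric difference. In particular, the family of open sets of X is well-graded. -/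
open Set

/-- In any type, an antisymmetric transitive relation has a "maximal" element in every
nonempty finite set. -/
lemma exists_rel_max {X : Type*} (r : X → X → Prop) (htrans : Transitive r)
    (hanti : ∀ a b, r a b → r b a → a = b) :
    ∀ n : ℕ, ∀ S : Set X, S.Finite → S.ncard ≤ n → S.Nonempty →
      ∃ x ∈ S, ∀ y ∈ S, r x y → x = y := by
  intro n
  induction n with
  | zero =>
    intro S hfin hle hne
    exact absurd ((Set.ncard_pos hfin).2 hne) (by omega)
  | succ n ih =>
    intro S hfin hle hne
    obtain ⟨x, hx⟩ := hne
    set T : Set X := {y ∈ S | r x y ∧ y ≠ x} with hT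
    by_cases hTne : T.Nonempty
    · have hTsub : T ⊆ S \ {x} := fun y hy => ⟨hy.1, hy.2.2⟩
      have hTfin : T.Finite := hfin.subset fun y hy => hy.1
      have hTcard : T.ncard ≤ n := by
        have h1 : T.ncard ≤ (S \ {x}).ncard :=
          Set.ncard_le_ncard hTsub (hfin.subset Set.diff_subset)
        have h2 : (S \ {x}).ncard = S.ncard - 1 :=
          Set.ncard_diff_singleton_of_mem hx
        omega
      obtain ⟨z, hzT, hzmax⟩ := ih T hTfin hTcard hTne
      refine ⟨z, hzT.1, fun y hy hzy => ?_⟩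
      have hxz : r x z := hzT.2.1
      have hxy : r x y := htrans hxz hzy
      by_cases hyx : y = x
      · subst hyx
        exact absurd (hanti _ _ hzy hxz) hzT.2.2
      · exact hzmax y ⟨hy, hxy, hyx⟩ hzy
    · refine ⟨x, hx, fun y hy hxy => ?_⟩
      by_contra hne'
      exact hTne ⟨y, hy, hxy, fun h => hne' h.symm⟩

lemma exists_spec_max {X : Type*} [TopologicalSpace X] [T0Space X] [Finite X]
    {S : Set X} (hne : S.Nonempty) : ∃ x ∈ S, ∀ y ∈ S, x ⤳ y → x = y :=
  exists_rel_max (· ⤳ ·) (fun _ _ _ h1 h2 => h1.trans h2)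
    (fun _ _ h1 h2 => (h1.antisymm h2).eq) S.ncard S (Set.toFinite S) le_rfl hne

lemma exists_spec_min {X : Type*} [TopologicalSpace X] [T0Space X] [Finite X]
    {S : Set X} (hne : S.Nonempty) : ∃ x ∈ S, ∀ y ∈ S, y ⤳ x → x = y :=
  exists_rel_max (fun a b => b ⤳ a) (fun _ _ _ h1 h2 => h2.trans h1)
    (fun _ _ h1 h2 => (h2.antisymm h1).eq) S.ncard S (Set.toFinite S) le_rfl hne

lemma chain_aux {X : Type*} [TopologicalSpace X] [Finite X] [T0Space X] :
    ∀ n : ℕ, ∀ O W : Set X, IsOpen O → IsOpen W → (symmDiff O W).ncard = n →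
    ∃ c : Fin (n + 1) → Set X,
      c 0 = O ∧ c (Fin.last n) = W ∧ (∀ i, IsOpen (c i)) ∧
      ∀ i : Fin n, (symmDiff (c i.castSucc) (c i.succ)).ncard = 1 := by
  intro n
  induction n with
  | zero =>
    intro O W hO hW hcard
    have : symmDiff O W = ∅ := by
      rw [← Set.ncard_eq_zero (Set.toFinite _)] at *; exact hcard
    have hOW : O = W := by
      have := symmDiff_eq_bot.mp this
      exact this
    exact ⟨fun _ => O, rfl, hOW, fun _ => hO, fun i => i.elim0⟩
  | succ n ih =>
    intro O W hO hW hcard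
    -- find a point x to toggle
    have key : ∃ x O', IsOpen O' ∧ symmDiff O O' = {x} ∧
        symmDiff O' W = symmDiff O W \ {x} ∧ x ∈ symmDiff O W := by
      by_cases hOW : (O \ W).Nonempty
      · obtain ⟨x, hxOW, hxmax⟩ := exists_spec_max hOW
        refine ⟨x, O \ {x}, ?_, ?_, ?_, Or.inl hxOW⟩
        · rw [isOpen_iff_forall_specializes]
          rintro a b hab ⟨hbO, hbx⟩
          refine ⟨(isOpen_iff_forall_specializes.mp hO) a b hab hbO, ?_⟩
          rintro rfl
          have hbW : b ∉ W := fun hbW => hxOW.2 (hab.mem_open hW hbW)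
          exact hbx (hxmax b ⟨hbO, hbW⟩ hab).symm
        · ext y
          simp only [Set.mem_symmDiff, Set.mem_diff, Set.mem_singleton_iff]
          constructor
          · rintro (⟨hyO, hy⟩ | ⟨⟨hyO, hyx⟩, hy⟩)
            · by_contra hyx; exact hy ⟨hyO, fun h => hyx h⟩
            · exact absurd hyO hy
          · rintro rfl
            exact Or.inl ⟨hxOW.1, fun h => h.2 rfl⟩
        · ext y
          simp only [Set.mem_symmDiff, Set.mem_diff, Set.mem_singleton_iff]
          have hxW : x ∉ W := hxOW.2
          constructor
          · rintro (⟨⟨hyO, hyx⟩, hyW⟩ | ⟨hyW, hy⟩)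
            · exact ⟨Or.inl ⟨hyO, hyW⟩, hyx⟩
            · refine ⟨Or.inr ⟨hyW, fun h => hy ⟨h, ?_⟩⟩, ?_⟩
              · rintro rfl; exact hxW hyW
              · rintro rfl; exact hxW hyW
          · rintro ⟨(⟨hyO, hyW⟩ | ⟨hyW, hyO⟩), hyx⟩
            · exact Or.inl ⟨⟨hyO, hyx⟩, hyW⟩
            · exact Or.inr ⟨hyW, fun h => hyO h.1⟩
      · have hWO : (W \ O).Nonempty := by
          have hsd : (symmDiff O W).Nonempty :=
            Set.nonempty_of_ncard_ne_zero (by omega)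
          obtain ⟨x, hx⟩ := hsd
          rcases Set.mem_symmDiff.mp hx with h | h
          · exact absurd ⟨x, h.1, h.2⟩ hOW
          · exact ⟨x, h.1, h.2⟩
        obtain ⟨x, hxWO, hxmin⟩ := exists_spec_min hWO
        refine ⟨x, O ∪ {x}, ?_, ?_, ?_, Or.inr hxWO⟩
        · rw [isOpen_iff_forall_specializes]
          rintro a b hab (hbO | hbx)
          · exact Or.inl ((isOpen_iff_forall_specializes.mp hO) a b hab hbO)
          · rw [Set.mem_singleton_iff] at hbx; subst hbx
            by_cases haO : a ∈ O
            · exact Or.inl haO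
            · have haW : a ∈ W := hab.mem_open hW hxWO.1
              exact Or.inr (hxmin a ⟨haW, haO⟩ hab).symm
        · ext y
          simp only [Set.mem_symmDiff, Set.mem_union, Set.mem_singleton_iff]
          have hxO : x ∉ O := hxWO.2
          constructor
          · rintro (⟨hyO, hy⟩ | ⟨(hyO | rfl), hy⟩)
            · exact absurd (Or.inl hyO) hy
            · exact absurd hyO hy
            · rfl
          · rintro rfl
            exact Or.inr ⟨Or.inr rfl, hxO⟩
        · ext y
          simp only [Set.mem_symmDiff, Set.mem_union, Set.mem_diff,
            Set.mem_singleton_iff]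
          have hxO : x ∉ O := hxWO.2
          have hxW : x ∈ W := hxWO.1
          constructor
          · rintro (⟨(hyO | rfl), hyW⟩ | ⟨hyW, hy⟩)
            · exact ⟨Or.inl ⟨hyO, hyW⟩, fun h => by subst h; exact hxO hyO⟩
            · exact absurd hxW hyW
            · exact ⟨Or.inr ⟨hyW, fun h => hy (Or.inl h)⟩,
                fun h => by subst h; exact hy (Or.inr rfl)⟩
          · rintro ⟨(⟨hyO, hyW⟩ | ⟨hyW, hyO⟩), hyx⟩
            · exact Or.inl ⟨Or.inl hyO, hyW⟩
            · exact Or.inr ⟨hyW, fun h => by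
                rcases h with h | h
                · exact hyO h
                · exact hyx h⟩
    obtain ⟨x, O', hO', hOO', hO'W, hxsd⟩ := key
    have hcard' : (symmDiff O' W).ncard = n := by
      rw [hO'W, Set.ncard_diff_singleton_of_mem hxsd, hcard]
      omega
    obtain ⟨c', hc'0, hc'last, hc'open, hc'step⟩ := ih O' W hO' hW hcard'
    refine ⟨Fin.cons O c', rfl, ?_, ?_, ?_⟩
    · have : Fin.last (n + 1) = Fin.succ (Fin.last n) := rfl
      rw [this, Fin.cons_succ, hc'last]
    · intro i
      refine Fin.cases ?_ ?_ i
      · exact hO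
      · intro j
        rw [Fin.cons_succ]
        exact hc'open j
    · intro i
      refine Fin.cases ?_ ?_ i
      · have h0 : (Fin.cons O c' : Fin (n + 2) → Set X) (Fin.castSucc 0) = O := rfl
        have h1 : (Fin.cons O c' : Fin (n + 2) → Set X) (Fin.succ 0) = O' := by
          rw [Fin.cons_succ, hc'0]
        rw [h0, h1, hOO', Set.ncard_singleton]
      · intro j
        have h0 : (Fin.cons O c' : Fin (n + 2) → Set X) (Fin.castSucc j.succ)
            = c' (Fin.castSucc j) := by
          rw [← Fin.succ_castSucc, Fin.cons_succ]
        have h1 : (Fin.cons O c' : Fin (n + 2) → Set X) (Fin.succ j.succ)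
            = c' (Fin.succ j) := by rw [Fin.cons_succ]
        rw [h0, h1]
        exact hc'step j

/-- every finite T₀ topological space is tight 1-connected: any two distinct
open sets `O, W` are joined by a chain of open sets `O₀ = O, …, O_m = W` with
`|O_i △ O_{i+1}| = 1` for all `i`, where `m = |O △ W|`. In particular the family of open
sets is well-graded. -/
theorem stmt_17 {X : Type*} [TopologicalSpace X] [Finite X] [T0Space X]
    (O W : Set X) (hO : IsOpen O) (hW : IsOpen W) (hne : O ≠ W) :
    ∃ c : Fin ((symmDiff O W).ncard + 1) → Set X,
      c 0 = O ∧ c (Fin.last ((symmDiff O W).ncard)) = W ∧ (∀ i, IsOpen (c i)) ∧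
      ∀ i : Fin ((symmDiff O W).ncard),
        (symmDiff (c i.castSucc) (c i.succ)).ncard = 1 :=
  chain_aux (symmDiff O W).ncard O W hO hW rfl
end
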